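/- Let K be a real symmetric positive definite g×g matrix and β ∈ (1/2)ℤ^g. Then Θ[β](Z) is an even function of Z: Θ[β](-Z) = Θ[β](Z) for all Z ∈ ℝ^g. -/

import Mathlib

open Finset in
/-- The tropical Riemann theta function with characteristic `β`. -/
noncomputable def ThetaChar {g : ℕ} (K : Matrix (Fin g) (Fin g) ℝ) (β Z : Fin g → ℝ) : ℝ :=
  (1/2) * (∑ i, ∑ j, β i * K i j * β j) + (∑ i, β i * Z i) +
    sInf {q : ℝ | ∃ m : Fin g → ℤ,
      q = (1/2) * (∑ i, ∑ j, (m i : ℝ) * K i j * (m j : ℝ)) +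
          ∑ i, (m i : ℝ) * (Z i + ∑ j, β j * K j i)}

/-!
Expanding the square, `Θ[β](Z)` is the infimum of `½ vKvᵀ + vZᵀ` over the coset `v ∈ β + ℤ^g`
(the shift of the infimum by the constant terms is legitimate because positive definiteness
bounds the quadratic function below). Replacing `Z` by `-Z` amounts to replacing `v` by `-v`,
i.e. the coset by `-β + ℤ^g`, and this is the same coset when `2β ∈ ℤ^g`.
-/

open Matrix Set

namespace Matrix

variable {n : Type*} [Fintype n] {K : Matrix n n ℝ}

theorem IsSymm.dotProduct_mulVec_comm (hK : K.IsSymm) (x y : n → ℝ) :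
    x ⬝ᵥ K *ᵥ y = y ⬝ᵥ K *ᵥ x := by
  rw [dotProduct_mulVec, ← mulVec_transpose, hK.eq, dotProduct_comm]

theorem sum_sum_mul_mul_eq_dotProduct_mulVec (K : Matrix n n ℝ) (x y : n → ℝ) :
    ∑ i, ∑ j, x i * K i j * y j = x ⬝ᵥ K *ᵥ y := by
  simp [dotProduct, mulVec, Finset.mul_sum, mul_assoc]

end Matrix

section ThetaExponent

variable {n : Type*} [Fintype n]

noncomputable def thetaExponent (K : Matrix n n ℝ) (Z v : n → ℝ) : ℝ :=
  (1/2) * (v ⬝ᵥ K *ᵥ v) + v ⬝ᵥ Z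

theorem thetaExponent_neg (K : Matrix n n ℝ) (Z v : n → ℝ) :
    thetaExponent K (-Z) v = thetaExponent K Z (-v) := by
  simp [thetaExponent, mulVec_neg]

theorem thetaExponent_add {K : Matrix n n ℝ} (hK : K.IsSymm) (Z u v : n → ℝ) :
    thetaExponent K Z (u + v) = thetaExponent K Z u + thetaExponent K (Z + u ᵥ* K) v := by
  have hvu := hK.dotProduct_mulVec_comm v u
  simp only [thetaExponent, add_dotProduct, dotProduct_add, mulVec_add, ← dotProduct_mulVec,
    dotProduct_comm v (u ᵥ* K)] at hvu ⊢
  linarith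

theorem Matrix.PosDef.bddBelow_range_thetaExponent [DecidableEq n] {K : Matrix n n ℝ}
    (hK : K.PosDef) (Z : n → ℝ) : BddBelow (range (thetaExponent K Z)) := by
  -- complete the square around a critical point `-w`, where `K w = Z`
  obtain ⟨w, hw⟩ := mulVec_surjective_iff_isUnit.mpr hK.isUnit Z
  have hsymm : K.IsSymm := isHermitian_iff_isSymm.mp hK.isHermitian
  refine ⟨-(1/2) * (w ⬝ᵥ Z), ?_⟩
  rintro _ ⟨x, rfl⟩
  have hsq := hK.posSemidef.dotProduct_mulVec_nonneg (x + w)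
  have hwx := hsymm.dotProduct_mulVec_comm w x
  simp only [star_trivial, mulVec_add, dotProduct_add, add_dotProduct, hw] at hsq hwx
  simp only [thetaExponent]
  linarith

end ThetaExponent

section ThetaChar

variable {g : ℕ} {K : Matrix (Fin g) (Fin g) ℝ}

theorem thetaChar_eq_add_iInf (K : Matrix (Fin g) (Fin g) ℝ) (β Z : Fin g → ℝ) :
    ThetaChar K β Z =
      thetaExponent K Z β + ⨅ m : Fin g → ℤ, thetaExponent K (Z + β ᵥ* K) fun i => (m i : ℝ) := by
  simp only [ThetaChar, thetaExponent, sum_sum_mul_mul_eq_dotProduct_mulVec]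
  congr 2
  ext q
  simp [eq_comm, dotProduct, vecMul, mul_add]

theorem thetaChar_eq_iInf (hK : K.PosDef) (β Z : Fin g → ℝ) :
    ThetaChar K β Z = ⨅ m : Fin g → ℤ, thetaExponent K Z (β + fun i => (m i : ℝ)) := by
  have hbdd :
      BddBelow (range fun m : Fin g → ℤ => thetaExponent K (Z + β ᵥ* K) fun i => (m i : ℝ)) :=
    (hK.bddBelow_range_thetaExponent _).mono <| by rintro _ ⟨m, rfl⟩; exact mem_range_self _
  simp only [thetaChar_eq_add_iInf, add_ciInf hbdd,
    thetaExponent_add (isHermitian_iff_isSymm.mp hK.isHermitian)]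

theorem thetaChar_add_intCast (hK : K.PosDef) (β Z : Fin g → ℝ) (n : Fin g → ℤ) :
    ThetaChar K (β + fun i => (n i : ℝ)) Z = ThetaChar K β Z := by
  simp only [thetaChar_eq_iInf hK]
  conv_rhs => rw [← (Equiv.addLeft n).iInf_comp]
  congr! 3 with m
  ext i
  simp [add_assoc]

theorem thetaChar_neg_right (hK : K.PosDef) (β Z : Fin g → ℝ) :
    ThetaChar K β (-Z) = ThetaChar K (-β) Z := by
  simp only [thetaChar_eq_iInf hK, thetaExponent_neg]
  conv_rhs => rw [← (Equiv.neg _).iInf_comp]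
  congr! 3 with m
  ext i
  simp [add_comm]

end ThetaChar

theorem theta_char_even_general {g : ℕ} (K : Matrix (Fin g) (Fin g) ℝ)
    (hpd : K.PosDef) (β : Fin g → ℝ)
    (hβ : ∃ m : Fin g → ℤ, ∀ i, β i = (m i : ℝ) / 2) (Z : Fin g → ℝ) :
    ThetaChar K β (-Z) = ThetaChar K β Z := by
  obtain ⟨n, hn⟩ := hβ
  have hβn : β = -β + fun i => (n i : ℝ) := by
    ext i
    simp only [Pi.add_apply, Pi.neg_apply, hn]
    ring
  calc ThetaChar K β (-Z) = ThetaChar K (-β) Z := thetaChar_neg_right hpd β Z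
    _ = ThetaChar K (-β + fun i => (n i : ℝ)) Z := (thetaChar_add_intCast hpd (-β) Z n).symm
    _ = ThetaChar K β Z := by rw [← hβn]

theorem theta_char_even {g : ℕ} (K : Matrix (Fin g) (Fin g) ℝ)
    (hsym : K.IsSymm) (hpd : K.PosDef) (β : Fin g → ℝ)
    (hβ : ∃ m : Fin g → ℤ, ∀ i, β i = (m i : ℝ) / 2) (Z : Fin g → ℝ) :
    ThetaChar K β (-Z) = ThetaChar K β Z :=
  theta_char_even_general K hpd β hβ Z
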